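/- Let d ≥ 1 and let α, β be real numbers with α + β > d, α < d, and β < d. Then there exists a constant C such that for every n ∈ ℤ^d, the sum over all decompositions n = n₁ + n₂ with n₁, n₂ ∈ ℤ^d of ⟨n₁⟩^(−α) ⟨n₂⟩^(−β) is at most C ⟨n⟩^(d − α − β), where ⟨m⟩ = (1 + |m|²)^{1/2}. -/

import Mathlib

/-!
Split `ℤ^d` dyadically, `2^k ≤ ⟨m⟩ < 2^(k+1)`; the `k`-th shell has `O(2^(kd))` points, so
`∑ ⟨m⟩^(-γ)` over `⟨m⟩ ≤ R` is a geometric series dominated by its last term `R^(d-γ)` when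
`γ < d`, and over `⟨m⟩ ≥ R` one dominated by its first term `R^(d-γ)` when `γ > d`.
Since `⟨n⟩ ≤ 2 max(⟨n₁⟩, ⟨n - n₁⟩)`, a term of the convolution with `⟨n₁⟩ ≤ ⟨n - n₁⟩` is at most
`⟨n₁⟩^(-α) max(⟨n₁⟩, ⟨n⟩/2)^(-β)`; summing this over `⟨n₁⟩ ≤ ⟨n⟩/2` (first estimate, `α < d`)
and over `⟨n₁⟩ > ⟨n⟩/2` (second estimate, `α + β > d`) gives `O(⟨n⟩^(d-α-β))`. The terms with
`⟨n₁⟩ > ⟨n - n₁⟩` are handled symmetrically.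
-/

/-- Japanese bracket of a lattice point. -/
noncomputable def jbZ {d : ℕ} (n : Fin d → ℤ) : ℝ :=
  Real.sqrt (1 + ∑ i, ((n i : ℝ)) ^ 2)

open Finset

noncomputable def dyadicIndex (r : ℝ) : ℕ := Nat.log 2 ⌊r⌋₊

lemma two_pow_dyadicIndex_le {r : ℝ} (hr : 1 ≤ r) : (2 : ℝ) ^ dyadicIndex r ≤ r :=
  calc (2 : ℝ) ^ dyadicIndex r = ((2 ^ dyadicIndex r : ℕ) : ℝ) := by push_cast; rfl
    _ ≤ ⌊r⌋₊ := by exact_mod_cast Nat.pow_log_le_self 2 (Nat.floor_pos.mpr hr).ne'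
    _ ≤ r := Nat.floor_le (by linarith)

lemma lt_two_pow_dyadicIndex_succ (r : ℝ) : r < 2 ^ (dyadicIndex r + 1) :=
  calc r < ⌊r⌋₊ + 1 := Nat.lt_floor_add_one r
    _ ≤ ((2 ^ (dyadicIndex r + 1) : ℕ) : ℝ) := by
      exact_mod_cast Nat.lt_pow_succ_log_self one_lt_two _
    _ = 2 ^ (dyadicIndex r + 1) := by push_cast; rfl

lemma dyadicIndex_mono : Monotone dyadicIndex :=
  fun _ _ h => Nat.log_mono_right (Nat.floor_le_floor h)

lemma rpow_neg_mul_rpow_neg_le {a b N α β : ℝ} (ha : 0 < a) (hb : 0 < b) (hα : 0 ≤ α)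
    (hβ : 0 ≤ β) (hN : N ^ 2 ≤ 2 * (a ^ 2 + b ^ 2)) :
    a ^ (-α) * b ^ (-β)
      ≤ a ^ (-α) * max a (N / 2) ^ (-β) + b ^ (-β) * max b (N / 2) ^ (-α) := by
  rcases le_total a b with hab | hba
  · have hmax : max a (N / 2) ≤ b := max_le hab (by nlinarith)
    have := Real.rpow_le_rpow_of_nonpos (lt_max_of_lt_left ha) hmax (neg_nonpos.mpr hβ)
    have : 0 ≤ b ^ (-β) * max b (N / 2) ^ (-α) := by positivity
    nlinarith [Real.rpow_pos_of_pos ha (-α)]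
  · have hmax : max b (N / 2) ≤ a := max_le hba (by nlinarith)
    have := Real.rpow_le_rpow_of_nonpos (lt_max_of_lt_left hb) hmax (neg_nonpos.mpr hα)
    have : 0 ≤ a ^ (-α) * max a (N / 2) ^ (-β) := by positivity
    nlinarith [Real.rpow_pos_of_pos hb (-β)]

section JapaneseBracket

variable {d : ℕ}

lemma jbZ_sq (n : Fin d → ℤ) : jbZ n ^ 2 = 1 + ∑ i, (n i : ℝ) ^ 2 :=
  Real.sq_sqrt (by positivity)

lemma one_le_jbZ (n : Fin d → ℤ) : 1 ≤ jbZ n :=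
  Real.one_le_sqrt.mpr (le_add_of_nonneg_right (by positivity))

lemma jbZ_pos (n : Fin d → ℤ) : 0 < jbZ n := one_pos.trans_le (one_le_jbZ n)

lemma abs_apply_le_jbZ (n : Fin d → ℤ) (i : Fin d) : |(n i : ℝ)| ≤ jbZ n := by
  refine Real.abs_le_sqrt ?_
  have := single_le_sum (f := fun j => (n j : ℝ) ^ 2) (fun j _ => by positivity) (mem_univ i)
  linarith

lemma jbZ_add_sq_le (a b : Fin d → ℤ) : jbZ (a + b) ^ 2 ≤ 2 * (jbZ a ^ 2 + jbZ b ^ 2) := by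
  have hpt : ∀ i, ((a i : ℝ) + b i) ^ 2 ≤ 2 * (a i : ℝ) ^ 2 + 2 * (b i : ℝ) ^ 2 :=
    fun i => by nlinarith [sq_nonneg ((a i : ℝ) - b i)]
  have hsum := sum_le_sum fun i (_ : i ∈ univ) => hpt i
  rw [sum_add_distrib, ← mul_sum, ← mul_sum] at hsum
  simp only [jbZ_sq, Pi.add_apply, Int.cast_add]
  linarith

lemma card_le_of_forall_jbZ_le {R : ℝ} (hR : 1 ≤ R) {s : Finset (Fin d → ℤ)}
    (hs : ∀ m ∈ s, jbZ m ≤ R) : (#s : ℝ) ≤ (3 * R) ^ d := by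
  set M : ℤ := ⌊R⌋
  have hsub : s ⊆ Fintype.piFinset fun _ => Icc (-M) M := by
    intro m hm
    rw [Fintype.mem_piFinset]
    intro i
    rw [mem_Icc, ← abs_le, Int.le_floor, Int.cast_abs]
    exact (abs_apply_le_jbZ m i).trans (hs m hm)
  have hbox : (#(Icc (-M) M) : ℝ) ≤ 3 * R := by
    have hM : (M : ℝ) ≤ R := Int.floor_le R
    have hM0 : 0 ≤ M := Int.floor_nonneg.mpr (by linarith)
    rw [Int.card_Icc, show M + 1 - -M = 2 * M + 1 by ring]
    have : ((2 * M + 1).toNat : ℝ) = 2 * M + 1 := by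
      exact_mod_cast Int.toNat_of_nonneg (by omega)
    linarith
  calc (#s : ℝ) ≤ #(Fintype.piFinset fun _ : Fin d => Icc (-M) M) := by
        exact_mod_cast card_le_card hsub
    _ = (#(Icc (-M) M) : ℝ) ^ d := by simp
    _ ≤ (3 * R) ^ d := pow_le_pow_left₀ (by positivity) hbox d

lemma sum_jbZ_rpow_neg_le_geom {γ : ℝ} (hγ : 0 ≤ γ) (s : Finset (Fin d → ℤ)) (t : Finset ℕ)
    (hst : ∀ m ∈ s, dyadicIndex (jbZ m) ∈ t) :
    ∑ m ∈ s, jbZ m ^ (-γ) ≤ 6 ^ d * ∑ k ∈ t, ((2 : ℝ) ^ ((d : ℝ) - γ)) ^ k := by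
  rw [← sum_fiberwise_of_maps_to hst, mul_sum]
  refine sum_le_sum fun k _ => ?_
  set u := {m ∈ s | dyadicIndex (jbZ m) = k}
  have hlow : ∀ m ∈ u, (2 : ℝ) ^ k ≤ jbZ m := fun m hm => by
    rw [← (mem_filter.mp hm).2]; exact two_pow_dyadicIndex_le (one_le_jbZ m)
  have hup : ∀ m ∈ u, jbZ m ≤ 2 ^ (k + 1) := fun m hm => by
    rw [← (mem_filter.mp hm).2]; exact (lt_two_pow_dyadicIndex_succ _).le
  have hcard : (#u : ℝ) ≤ (3 * 2 ^ (k + 1)) ^ d :=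
    card_le_of_forall_jbZ_le (one_le_pow₀ one_le_two) hup
  calc ∑ m ∈ u, jbZ m ^ (-γ) ≤ ∑ _m ∈ u, ((2 : ℝ) ^ k) ^ (-γ) :=
        sum_le_sum fun m hm =>
          Real.rpow_le_rpow_of_nonpos (by positivity) (hlow m hm) (neg_nonpos.mpr hγ)
    _ = #u * ((2 : ℝ) ^ k) ^ (-γ) := by rw [sum_const, nsmul_eq_mul]
    _ ≤ (3 * 2 ^ (k + 1)) ^ d * ((2 : ℝ) ^ k) ^ (-γ) := by gcongr
    _ = 6 ^ d * (((2 : ℝ) ^ k) ^ (d : ℝ) * ((2 : ℝ) ^ k) ^ (-γ)) := by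
        rw [Real.rpow_natCast, ← mul_assoc, ← mul_pow]; congr 2; ring
    _ = 6 ^ d * ((2 : ℝ) ^ ((d : ℝ) - γ)) ^ k := by
        rw [← Real.rpow_add (by positivity), ← sub_eq_add_neg,
          Real.rpow_pow_comm zero_le_two]

lemma exists_sum_jbZ_rpow_neg_le_of_lt {γ : ℝ} (hγ : 0 ≤ γ) (hγd : γ < d) :
    ∃ C > 0, ∀ R > 0, ∀ s : Finset (Fin d → ℤ), (∀ m ∈ s, jbZ m ≤ R) →
      ∑ m ∈ s, jbZ m ^ (-γ) ≤ C * R ^ ((d : ℝ) - γ) := by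
  set ρ : ℝ := 2 ^ ((d : ℝ) - γ)
  have hρ : 1 < ρ := Real.one_lt_rpow one_lt_two (by linarith)
  have hρ1 : 0 < ρ - 1 := by linarith
  refine ⟨6 ^ d * (ρ / (ρ - 1)), by positivity, fun R hR s hs => ?_⟩
  obtain rfl | ⟨m₀, hm₀⟩ := s.eq_empty_or_nonempty
  · simp only [sum_empty]; positivity
  have hR1 : 1 ≤ R := (one_le_jbZ m₀).trans (hs m₀ hm₀)
  set K := dyadicIndex R
  have hρK : ρ ^ K ≤ R ^ ((d : ℝ) - γ) := by
    rw [Real.rpow_pow_comm zero_le_two]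
    exact Real.rpow_le_rpow (by positivity) (two_pow_dyadicIndex_le hR1) (by linarith)
  calc ∑ m ∈ s, jbZ m ^ (-γ) ≤ 6 ^ d * ∑ k ∈ range (K + 1), ρ ^ k :=
        sum_jbZ_rpow_neg_le_geom hγ s _
          fun m hm => mem_range_succ_iff.mpr (dyadicIndex_mono (hs m hm))
    _ = 6 ^ d * ((ρ * ρ ^ K - 1) / (ρ - 1)) := by rw [geom_sum_eq hρ.ne', pow_succ']
    _ ≤ 6 ^ d * (ρ * R ^ ((d : ℝ) - γ) / (ρ - 1)) := by gcongr; nlinarith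
    _ = 6 ^ d * (ρ / (ρ - 1)) * R ^ ((d : ℝ) - γ) := by ring

lemma exists_sum_jbZ_rpow_neg_le_of_gt {γ : ℝ} (hγd : d < γ) :
    ∃ C > 0, ∀ R > 0, ∀ s : Finset (Fin d → ℤ), (∀ m ∈ s, R ≤ jbZ m) →
      ∑ m ∈ s, jbZ m ^ (-γ) ≤ C * R ^ ((d : ℝ) - γ) := by
  set ρ : ℝ := 2 ^ ((d : ℝ) - γ)
  have hρ0 : 0 < ρ := by positivity
  have hρ1 : ρ < 1 := Real.rpow_lt_one_of_one_lt_of_neg one_lt_two (by linarith)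
  have h1ρ : 0 < 1 - ρ := by linarith
  refine ⟨6 ^ d / (ρ * (1 - ρ)), by positivity, fun R hR s hs => ?_⟩
  set K := dyadicIndex R
  set M := s.sup fun m => dyadicIndex (jbZ m)
  have hρK : ρ ^ (K + 1) ≤ R ^ ((d : ℝ) - γ) := by
    rw [Real.rpow_pow_comm zero_le_two]
    exact Real.rpow_le_rpow_of_nonpos hR (lt_two_pow_dyadicIndex_succ R).le (by linarith)
  have hst : ∀ m ∈ s, dyadicIndex (jbZ m) ∈ Ico K (M + 1) := fun m hm =>
    mem_Ico.mpr ⟨dyadicIndex_mono (hs m hm),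
      Nat.lt_succ_of_le (le_sup (f := fun m => dyadicIndex (jbZ m)) hm)⟩
  calc ∑ m ∈ s, jbZ m ^ (-γ) ≤ 6 ^ d * ∑ k ∈ Ico K (M + 1), ρ ^ k :=
        sum_jbZ_rpow_neg_le_geom (by linarith [d.cast_nonneg (α := ℝ)]) s _ hst
    _ ≤ 6 ^ d * (ρ ^ K / (1 - ρ)) := by gcongr; exact geom_sum_Ico_le_of_lt_one hρ0.le hρ1
    _ = 6 ^ d / (ρ * (1 - ρ)) * ρ ^ (K + 1) := by field_simp; ring
    _ ≤ 6 ^ d / (ρ * (1 - ρ)) * R ^ ((d : ℝ) - γ) := by gcongr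

lemma exists_sum_rpow_neg_mul_max_rpow_neg_le {α β : ℝ} (hα : 0 ≤ α) (hαd : α < d)
    (hαβ : d < α + β) :
    ∃ C > 0, ∀ R > 0, ∀ s : Finset (Fin d → ℤ),
      ∑ m ∈ s, jbZ m ^ (-α) * max (jbZ m) R ^ (-β) ≤ C * R ^ ((d : ℝ) - α - β) := by
  obtain ⟨C₁, hC₁, h₁⟩ := exists_sum_jbZ_rpow_neg_le_of_lt hα hαd
  obtain ⟨C₂, hC₂, h₂⟩ := exists_sum_jbZ_rpow_neg_le_of_gt hαβ
  refine ⟨C₁ + C₂, by positivity, fun R hR s => ?_⟩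
  rw [← sum_filter_add_sum_filter_not s (fun m => jbZ m ≤ R)]
  have hnear : ∑ m ∈ s with jbZ m ≤ R, jbZ m ^ (-α) * max (jbZ m) R ^ (-β)
      ≤ C₁ * R ^ ((d : ℝ) - α - β) :=
    calc ∑ m ∈ s with jbZ m ≤ R, jbZ m ^ (-α) * max (jbZ m) R ^ (-β)
        = (∑ m ∈ s with jbZ m ≤ R, jbZ m ^ (-α)) * R ^ (-β) := by
          rw [sum_mul]
          exact sum_congr rfl fun m hm => by rw [max_eq_right (mem_filter.mp hm).2]
      _ ≤ C₁ * R ^ ((d : ℝ) - α) * R ^ (-β) := by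
          gcongr; exact h₁ R hR _ fun m hm => (mem_filter.mp hm).2
      _ = C₁ * R ^ ((d : ℝ) - α - β) := by
          rw [mul_assoc, ← Real.rpow_add hR, ← sub_eq_add_neg]
  have hfar : ∑ m ∈ s with ¬jbZ m ≤ R, jbZ m ^ (-α) * max (jbZ m) R ^ (-β)
      ≤ C₂ * R ^ ((d : ℝ) - α - β) :=
    calc ∑ m ∈ s with ¬jbZ m ≤ R, jbZ m ^ (-α) * max (jbZ m) R ^ (-β)
        = ∑ m ∈ s with ¬jbZ m ≤ R, jbZ m ^ (-(α + β)) :=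
          sum_congr rfl fun m hm => by
            rw [max_eq_left (not_le.mp (mem_filter.mp hm).2).le, ← Real.rpow_add (jbZ_pos m),
              neg_add]
      _ ≤ C₂ * R ^ ((d : ℝ) - α - β) := by
          rw [sub_sub]; exact h₂ R hR _ fun m hm => (not_le.mp (mem_filter.mp hm).2).le
  linarith

end JapaneseBracket

theorem sum_convolution_bracket_general (d : ℕ) (α β : ℝ)
    (hαβ : α + β > d) (hα : α < d) (hβ : β < d) :
    ∃ C > 0, ∀ n : Fin d → ℤ,
      (∑' n₁ : Fin d → ℤ, jbZ n₁ ^ (-α) * jbZ (n - n₁) ^ (-β))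
        ≤ C * jbZ n ^ ((d : ℝ) - α - β) := by
  have hα0 : 0 < α := by linarith
  have hβ0 : 0 < β := by linarith
  obtain ⟨C₁, hC₁, h₁⟩ := exists_sum_rpow_neg_mul_max_rpow_neg_le hα0.le hα hαβ
  obtain ⟨C₂, hC₂, h₂⟩ :=
    exists_sum_rpow_neg_mul_max_rpow_neg_le hβ0.le hβ (by linarith : (d : ℝ) < β + α)
  refine ⟨(C₁ + C₂) * 2 ^ (α + β - d), by positivity,
    fun n => tsum_le_of_sum_le' (mul_nonneg (by positivity) (Real.rpow_nonneg (jbZ_pos n).le _))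
      fun s => ?_⟩
  have hR : 0 < jbZ n / 2 := half_pos (jbZ_pos n)
  calc ∑ m ∈ s, jbZ m ^ (-α) * jbZ (n - m) ^ (-β)
      ≤ ∑ m ∈ s, (jbZ m ^ (-α) * max (jbZ m) (jbZ n / 2) ^ (-β)
          + jbZ (n - m) ^ (-β) * max (jbZ (n - m)) (jbZ n / 2) ^ (-α)) :=
        sum_le_sum fun m _ => rpow_neg_mul_rpow_neg_le (jbZ_pos _) (jbZ_pos _) hα0.le hβ0.le
          (by simpa using jbZ_add_sq_le m (n - m))
    _ = ∑ m ∈ s, jbZ m ^ (-α) * max (jbZ m) (jbZ n / 2) ^ (-β)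
          + ∑ m ∈ s.map (Equiv.subLeft n).toEmbedding,
              jbZ m ^ (-β) * max (jbZ m) (jbZ n / 2) ^ (-α) := by
        rw [sum_add_distrib, sum_map]; rfl
    _ ≤ C₁ * (jbZ n / 2) ^ ((d : ℝ) - α - β) + C₂ * (jbZ n / 2) ^ ((d : ℝ) - β - α) :=
        add_le_add (h₁ _ hR s) (h₂ _ hR _)
    _ = (C₁ + C₂) * 2 ^ (α + β - d) * jbZ n ^ ((d : ℝ) - α - β) := by
        rw [sub_right_comm (d : ℝ) β α, Real.div_rpow (jbZ_pos n).le zero_le_two,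
          show α + β - d = -((d : ℝ) - α - β) by ring, Real.rpow_neg zero_le_two]
        ring

theorem sum_convolution_bracket (d : ℕ) (hd : 1 ≤ d) (α β : ℝ)
    (hαβ : α + β > d) (hα : α < d) (hβ : β < d) :
    ∃ C > 0, ∀ n : Fin d → ℤ,
      (∑' n₁ : Fin d → ℤ, jbZ n₁ ^ (-α) * jbZ (n - n₁) ^ (-β))
        ≤ C * jbZ n ^ ((d : ℝ) - α - β) :=
  sum_convolution_bracket_general d α β hαβ hα hβ
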